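/- arXiv:0809.0076 — 6 statements merged into one kernel-verified Lean document; each statement's English description precedes it below -/
import Mathlib

section
/- det(A_n) = Σ_{k=1}^{n} w(k) b(k), where b is the Dirichlet inverse of a. -/
/-!
`D_n(a)` is upper unitriangular and `D_n(a) D_n(b) = D_n(a ⋆ b)` for Dirichlet convolution `⋆`,
so `D_n(b)` is the inverse of `D_n(a)`, which has determinant `1`. Since `a 1 = w 1`, the matrix
`A_n` is `D_n(a)` with its first column replaced by `(w 1, …, w n)`; by Cramer's rule `det A_n` is
the first entry of `D_n(b) (w 1, …, w n)`, and the first row of `D_n(b)` is `(b 1, …, b n)`.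
-/

/-- The Dirichlet matrix `D_n` attached to the coefficient sequence `a`:
its `(i,j)` entry (with `1 ≤ i, j ≤ n`, realized via `Fin n` shifted by one)
is `a (j / i)` if `i ∣ j` and `0` otherwise. -/
def Dmat (n : ℕ) (a : ℕ → ℂ) : Matrix (Fin n) (Fin n) ℂ :=
  fun i j => if (i.val + 1) ∣ (j.val + 1) then a ((j.val + 1) / (i.val + 1)) else 0

/-- The weight matrix `W_n`: its `(i,1)` entry is `w i` for `2 ≤ i ≤ n`
and all other entries are `0`. -/
def Wmat (n : ℕ) (w : ℕ → ℂ) : Matrix (Fin n) (Fin n) ℂ :=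
  fun i j => if j.val = 0 ∧ i.val ≠ 0 then w (i.val + 1) else 0

/-- `A_n = W_n + D_n`. -/
def Amat (n : ℕ) (a w : ℕ → ℂ) : Matrix (Fin n) (Fin n) ℂ :=
  Wmat n w + Dmat n a

open Finset Matrix

theorem Fin.sum_univ_add_one_eq_sum_Icc {M : Type*} [AddCommMonoid M] (n : ℕ) (f : ℕ → M) :
    ∑ k : Fin n, f (k.val + 1) = ∑ k ∈ Icc 1 n, f k := by
  rw [Fin.sum_univ_eq_sum_range (fun k => f (k + 1)), range_eq_Ico, sum_Ico_add',
    zero_add, Ico_add_one_right_eq_Icc]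

theorem Fin.sum_univ_ite_dvd_eq_sum_divisors {M : Type*} [AddCommMonoid M] {n J : ℕ}
    (hJ : J ≠ 0) (hJn : J ≤ n) (g : ℕ → M) :
    ∑ k : Fin n, (if k.val + 1 ∣ J then g (k.val + 1) else 0) = ∑ K ∈ J.divisors, g K := by
  rw [Fin.sum_univ_add_one_eq_sum_Icc n (fun K => if K ∣ J then g K else 0), ← sum_filter]
  congr 1
  ext K
  simp only [mem_filter, mem_Icc, Nat.mem_divisors]
  constructor
  · rintro ⟨-, hK⟩
    exact ⟨hK, hJ⟩
  · rintro ⟨hK, -⟩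
    exact ⟨⟨Nat.pos_of_dvd_of_pos hK (Nat.pos_of_ne_zero hJ), (Nat.le_of_dvd
      (Nat.pos_of_ne_zero hJ) hK).trans hJn⟩, hK⟩

theorem Nat.sum_filter_dvd_divisors_mul {M : Type*} [AddCommMonoid M] {I : ℕ} (hI : I ≠ 0)
    (m : ℕ) (f : ℕ → M) :
    ∑ K ∈ (I * m).divisors with I ∣ K, f K = ∑ d ∈ m.divisors, f (I * d) := by
  have hfilter : {K ∈ (I * m).divisors | I ∣ K} = m.divisors.image (I * ·) := by
    ext K
    simp only [mem_filter, Nat.mem_divisors, mem_image, mul_ne_zero_iff]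
    constructor
    · rintro ⟨⟨hK, -, hm⟩, d, rfl⟩
      exact ⟨d, ⟨Nat.dvd_of_mul_dvd_mul_left (Nat.pos_of_ne_zero hI) hK, hm⟩, rfl⟩
    · rintro ⟨d, ⟨hd, hm⟩, rfl⟩
      exact ⟨⟨Nat.mul_dvd_mul_left I hd, hI, hm⟩, dvd_mul_right I d⟩
  rw [hfilter, sum_image fun x _ y _ h => Nat.eq_of_mul_eq_mul_left (Nat.pos_of_ne_zero hI) h]

theorem Matrix.adjugate_eq_det_smul_of_mul_eq_one {R ι : Type*} [CommRing R] [Fintype ι]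
    [DecidableEq ι] {A B : Matrix ι ι R} (h : A * B = 1) : adjugate A = A.det • B := by
  calc adjugate A = B * A * adjugate A := by rw [mul_eq_one_comm.mp h, one_mul]
    _ = A.det • B := by rw [Matrix.mul_assoc, mul_adjugate, mul_smul_comm, mul_one]

theorem Matrix.det_updateCol_of_mul_eq_one {R ι : Type*} [CommRing R] [Fintype ι]
    [DecidableEq ι] {A B : Matrix ι ι R} (h : A * B = 1) (j : ι) (v : ι → R) :
    (A.updateCol j v).det = A.det * (B *ᵥ v) j := by
  rw [← cramer_apply, cramer_eq_adjugate_mulVec, adjugate_eq_det_smul_of_mul_eq_one h,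
    smul_mulVec, Pi.smul_apply, smul_eq_mul]

def dirichletConv (a b : ℕ → ℂ) (k : ℕ) : ℂ :=
  ∑ d ∈ k.divisors, a d * b (k / d)

theorem Dmat_mul_Dmat (n : ℕ) (a b : ℕ → ℂ) :
    Dmat n a * Dmat n b = Dmat n (dirichletConv a b) := by
  ext i j
  have hentry : ∀ k : Fin n, Dmat n a i k * Dmat n b k j =
      if k.val + 1 ∣ j.val + 1 then
        (if i.val + 1 ∣ k.val + 1 then a ((k.val + 1) / (i.val + 1)) else 0) *
          b ((j.val + 1) / (k.val + 1)) else 0 := by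
    intro k
    simp only [Dmat, mul_ite, mul_zero]
  rw [mul_apply, Fintype.sum_congr _ _ hentry,
    Fin.sum_univ_ite_dvd_eq_sum_divisors (Nat.add_one_ne_zero _) j.isLt
      (fun K => (if i.val + 1 ∣ K then a (K / (i.val + 1)) else 0) * b ((j.val + 1) / K))]
  simp only [ite_mul, zero_mul, ← sum_filter, Dmat, dirichletConv]
  split_ifs with hij
  · obtain ⟨m, hm⟩ := hij
    rw [hm, Nat.sum_filter_dvd_divisors_mul (Nat.add_one_ne_zero _)]
    simp only [Nat.mul_div_cancel_left _ i.val.add_one_pos,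
      Nat.mul_div_mul_left _ _ i.val.add_one_pos]
  · refine sum_eq_zero fun K hK => absurd ?_ hij
    rw [mem_filter, Nat.mem_divisors] at hK
    exact hK.2.trans hK.1.1

theorem Dmat_eq_one (n : ℕ) {c : ℕ → ℂ} (h1 : c 1 = 1) (hc : ∀ k, 1 < k → c k = 0) :
    Dmat n c = 1 := by
  ext i j
  by_cases hij : i = j
  · subst hij
    simp [Dmat, h1]
  rw [Dmat, one_apply_ne hij]
  split_ifs with hdvd
  · obtain ⟨m, hm⟩ := hdvd
    rw [hm, Nat.mul_div_cancel_left _ i.val.add_one_pos]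
    refine hc m ?_
    rcases m with _ | _ | m
    · omega
    · exact absurd (Fin.ext (by omega)) hij
    · omega
  · rfl

theorem det_Dmat (n : ℕ) (a : ℕ → ℂ) : (Dmat n a).det = a 1 ^ n := by
  have htri : (Dmat n a).IsUpperTriangular := fun i j (hji : j < i) =>
    if_neg fun h => absurd (Nat.le_of_dvd j.val.add_one_pos h) (by omega)
  rw [det_of_isUpperTriangular htri]
  simp [Dmat]

theorem Amat_eq_updateCol (n : ℕ) {a w : ℕ → ℂ} (h : a 1 = w 1) :
    Amat (n + 1) a w = (Dmat (n + 1) a).updateCol 0 (fun i => w (i.val + 1)) := by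
  ext i j
  simp only [Amat, Wmat, Dmat, Matrix.add_apply, updateCol_apply, Fin.ext_iff, Fin.val_zero]
  by_cases hj : j.val = 0 <;> by_cases hi : i.val = 0 <;> simp [hi, hj, h]

/-- `det A_n = ∑_{k=1}^{n} w k * b k`, where `b` is the Dirichlet inverse of `a`. -/
theorem det_Amat (n : ℕ) (hn : 1 ≤ n) (a w b : ℕ → ℂ) (ha : a 1 = 1) (hw : w 1 = 1)
    (hb1 : b 1 = 1) (hb : ∀ k : ℕ, 1 < k → ∑ d ∈ k.divisors, a d * b (k / d) = 0) :
    (Amat n a w).det = ∑ k ∈ Finset.Icc 1 n, w k * b k := by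
  obtain ⟨n, rfl⟩ := Nat.exists_eq_add_of_le' hn
  have hinv : Dmat (n + 1) a * Dmat (n + 1) b = 1 := by
    rw [Dmat_mul_Dmat]
    exact Dmat_eq_one _ (by simp [dirichletConv, ha, hb1]) hb
  rw [Amat_eq_updateCol n (ha.trans hw.symm), det_updateCol_of_mul_eq_one hinv, det_Dmat, ha,
    one_pow, one_mul, ← Fin.sum_univ_add_one_eq_sum_Icc]
  simp [mulVec, dotProduct, Dmat, mul_comm]
end

section
/- det(C_n) = Σ_{k=1}^{n} μ(k), the Mertens function at n. -/
/-- The `n × n` Redheffer matrix: its `(i,j)` entry (with `1 ≤ i, j ≤ n`, realized via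
`Fin n` shifted by one) is `1` if `j = 1` or `i ∣ j`, and `0` otherwise. -/
def Cmat (n : ℕ) : Matrix (Fin n) (Fin n) ℤ :=
  fun i j => if j.val = 0 ∨ (i.val + 1) ∣ (j.val + 1) then 1 else 0

/-!
The Redheffer matrix is the divisibility matrix `D` (upper unitriangular, so `det D = 1`) with its
first column replaced by the all-ones vector. Möbius inversion says that `D⁻¹` is the matrix
`(μ (j / i))_{i ∣ j}`, so by Cramer's rule `det C` is the first entry of `D⁻¹ 𝟙`, i.e. the first
row sum `∑ μ j` of the Möbius matrix. This works for any divisor-closed index set.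
-/

open Finset Matrix ArithmeticFunction
open scoped ArithmeticFunction.Moebius

theorem ArithmeticFunction.sum_divisors_moebius {R : Type*} [Ring R] (m : ℕ) :
    ∑ d ∈ m.divisors, (μ d : R) = if m = 1 then 1 else 0 := by
  rw [← one_apply, ← coe_moebius_mul_coe_zeta, coe_mul_zeta_apply]
  simp only [intCoe_apply]

theorem Nat.filter_dvd_divisors_mul {i m : ℕ} (hi : i ≠ 0) :
    {k ∈ (i * m).divisors | i ∣ k} = m.divisors.image (i * ·) := by
  ext k
  simp only [mem_filter, Nat.mem_divisors, mem_image, mul_ne_zero_iff, ne_eq]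
  constructor
  · rintro ⟨⟨hk, -, hm⟩, d, rfl⟩
    exact ⟨d, ⟨(mul_dvd_mul_iff_left hi).mp hk, hm⟩, rfl⟩
  · rintro ⟨d, ⟨hd, hm⟩, rfl⟩
    exact ⟨⟨mul_dvd_mul_left i hd, hi, hm⟩, dvd_mul_right i d⟩

theorem ArithmeticFunction.sum_moebius_div_filter_dvd_divisors {R : Type*} [Ring R] {i : ℕ}
    (hi : i ≠ 0) (j : ℕ) :
    ∑ k ∈ j.divisors with i ∣ k, (μ (k / i) : R) = if i = j then 1 else 0 := by
  by_cases hij : i ∣ j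
  · obtain ⟨m, rfl⟩ := hij
    rw [Nat.filter_dvd_divisors_mul hi, sum_image (mul_right_injective₀ hi).injOn]
    simp only [Nat.mul_div_cancel_left _ (Nat.pos_of_ne_zero hi), sum_divisors_moebius]
    simp [hi]
  · rw [sum_eq_zero, if_neg (by rintro rfl; exact hij dvd_rfl)]
    intro k hk
    simp only [mem_filter, Nat.mem_divisors] at hk
    exact absurd (hk.2.trans hk.1.1) hij

section

variable (R : Type*) [CommRing R] (s : Finset ℕ)

def divisibilityMatrix : Matrix s s R :=
  of fun i j => if (i : ℕ) ∣ j then 1 else 0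

def moebiusMatrix : Matrix s s R :=
  of fun i j => if (i : ℕ) ∣ j then (μ (j / i : ℕ) : R) else 0

def redhefferMatrix : Matrix s s R :=
  of fun i j => if (j : ℕ) = 1 ∨ (i : ℕ) ∣ j then 1 else 0

variable {R s}

theorem moebiusMatrix_mul_divisibilityMatrix (hs : ∀ j ∈ s, j.divisors ⊆ s) (h0 : 0 ∉ s) :
    moebiusMatrix R s * divisibilityMatrix R s = 1 := by
  ext i j
  have hi : (i : ℕ) ≠ 0 := fun h => h0 (h ▸ i.2)
  have hj : (j : ℕ) ≠ 0 := fun h => h0 (h ▸ j.2)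
  calc (moebiusMatrix R s * divisibilityMatrix R s) i j
      = ∑ k ∈ s, if k ∈ (j : ℕ).divisors ∧ (i : ℕ) ∣ k then (μ (k / i : ℕ) : R) else 0 := by
        rw [Matrix.mul_apply, ← sum_coe_sort s]
        refine sum_congr rfl fun k _ => ?_
        simp only [moebiusMatrix, divisibilityMatrix, of_apply, Nat.mem_divisors, hj, ne_eq,
          not_false_eq_true, and_true, mul_ite, mul_one, mul_zero, ite_and]
    _ = ∑ k ∈ (j : ℕ).divisors with (i : ℕ) ∣ k, (μ (k / i : ℕ) : R) := by
        rw [← sum_filter, ← filter_filter, filter_mem_eq_inter, inter_eq_right.mpr (hs j j.2)]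
    _ = (1 : Matrix s s R) i j := by
        simp only [sum_moebius_div_filter_dvd_divisors hi, Matrix.one_apply, Subtype.ext_iff]

theorem det_divisibilityMatrix (h0 : 0 ∉ s) : (divisibilityMatrix R s).det = 1 := by
  rw [det_of_isUpperTriangular]
  · simp [divisibilityMatrix]
  · intro i j hji
    have hj : (j : ℕ) ≠ 0 := fun h => h0 (h ▸ j.2)
    exact if_neg fun hij => (Nat.le_of_dvd (Nat.pos_of_ne_zero hj) hij).not_gt hji

theorem redhefferMatrix_eq_updateCol (h1 : 1 ∈ s) :
    redhefferMatrix R s = (divisibilityMatrix R s).updateCol ⟨1, h1⟩ 1 := by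
  ext i j
  by_cases hj : (j : ℕ) = 1
  · simp [redhefferMatrix, updateCol_apply, Subtype.ext_iff, hj]
  · simp [redhefferMatrix, divisibilityMatrix, Subtype.ext_iff, hj]

theorem det_redhefferMatrix (hs : ∀ j ∈ s, j.divisors ⊆ s) (h0 : 0 ∉ s) (h1 : 1 ∈ s) :
    (redhefferMatrix R s).det = ∑ k ∈ s, (μ k : R) := by
  have hdet := det_divisibilityMatrix (R := R) h0
  rw [redhefferMatrix_eq_updateCol h1, ← cramer_apply,
    ← det_smul_inv_mulVec_eq_cramer _ _ (by simp [hdet]), hdet, one_smul,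
    inv_eq_left_inv (moebiusMatrix_mul_divisibilityMatrix hs h0), ← sum_coe_sort s]
  simp [mulVec, dotProduct, moebiusMatrix]

end

def finEquivIcc (n : ℕ) : Fin n ≃ Icc 1 n where
  toFun i := ⟨i + 1, by simp⟩
  invFun k := ⟨k - 1, by have := mem_Icc.mp k.2; omega⟩
  left_inv i := by simp
  right_inv k := by have := mem_Icc.mp k.2; ext; simp only; omega

theorem Cmat_eq_submatrix_redhefferMatrix (n : ℕ) :
    Cmat n = (redhefferMatrix ℤ (Icc 1 n)).submatrix (finEquivIcc n) (finEquivIcc n) := by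
  ext i j
  simp [Cmat, redhefferMatrix, finEquivIcc]

/-- `det C_n = ∑_{k=1}^{n} μ(k)`, the Mertens function at `n`. -/
theorem det_Cmat (n : ℕ) (hn : 1 ≤ n) :
    (Cmat n).det = ∑ k ∈ Finset.Icc 1 n, ArithmeticFunction.moebius k := by
  have hdivisors : ∀ j ∈ Icc 1 n, j.divisors ⊆ Icc 1 n := fun j hj d hd => by
    have := Nat.divisor_le hd
    have := Nat.pos_of_mem_divisors hd
    simp only [mem_Icc] at hj ⊢
    omega
  rw [Cmat_eq_submatrix_redhefferMatrix, det_submatrix_equiv_self,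
    det_redhefferMatrix hdivisors (by simp) (mem_Icc.mpr ⟨le_rfl, hn⟩)]
  simp only [Int.cast_id]
end

section
/- The characteristic polynomial p_n(x) = det(xI_n − A_n) equals (x−1)^{n−r−1} · ((x−1)^{r+1} − Σ_{k=1}^{r} v(n,k)(x−1)^{r−k}), where r = ⌊log₂ n⌋. -/
/-- `dcoef a m k`: the sum of `∏ a ℓᵢ` over `k`-tuples of integers `ℓᵢ ≥ 2`
with product `m`. -/
noncomputable def dcoef (a : ℕ → ℂ) (m k : ℕ) : ℂ :=
  ∑ t ∈ (Fintype.piFinset fun _ : Fin k => Finset.Icc 2 m).filter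
      (fun t => ∏ i, t i = m), ∏ i, a (t i)

/-- `vcoef a w m k = ∑_{j=1}^{m} w j * d(j,k)`. -/
noncomputable def vcoef (a w : ℕ → ℂ) (m k : ℕ) : ℂ :=
  ∑ j ∈ Finset.Icc 1 m, w j * dcoef a j k

/-! Write `D_n = 1 + N`. Since `N i j ≠ 0` forces `2 (i+1) ≤ j+1`, the matrix `N` satisfies
`N ^ (r + 1) = 0` with `r = ⌊log₂ n⌋`, and the first row of `N ^ k` is `(d(j, k))_j`.
Now `x I - A_n = (x - 1) I - N - W_n` and `W_n` is supported on the first column, so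
`det (x I - A_n) = (x - 1)^n - (adj ((x - 1) I - N) *ᵥ u)₁` where `u` is that column. The
adjugate is the truncated geometric series `∑_{k ≤ r} (x - 1)^(n-1-k) N^k`, and the first entry
of `N^k u` is `v(n, k)` for `k ≥ 1` and `0` for `k = 0`. -/

open Polynomial Matrix Finset

namespace Matrix

variable {ι R : Type*} [Fintype ι] [DecidableEq ι] [CommRing R]

theorem pow_apply_eq_zero_of_lt_two_pow_mul {N : Matrix ι ι R} (f : ι → ℕ)
    (hN : ∀ i j, f j < 2 * f i → N i j = 0) (k : ℕ) :
    ∀ i j, f j < 2 ^ k * f i → (N ^ k) i j = 0 := by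
  induction k with
  | zero =>
    intro i j h
    exact one_apply_ne (by rintro rfl; simp at h)
  | succ k ih =>
    intro i j h
    rw [pow_succ, mul_apply]
    refine sum_eq_zero fun l _ => ?_
    by_cases hl : f l < 2 ^ k * f i
    · rw [ih i l hl, zero_mul]
    · rw [hN l j (by rw [pow_succ] at h; linarith), mul_zero]

theorem det_sub_of_eq_zero_off_col (P M : Matrix ι ι R) {z : ι}
    (hM : ∀ i j, j ≠ z → M i j = 0) :
    (P - M).det = P.det - (adjugate P *ᵥ fun i => M i z) z := by
  have hcol : P - M = P.updateCol z ((fun i => P i z) + (-1 : R) • fun i => M i z) := by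
    ext i j
    by_cases hj : j = z
    · subst hj; simp [sub_eq_add_neg]
    · simp [hj, hM i j hj]
  rw [hcol, det_updateCol_add, det_updateCol_smul, updateCol_eq_self, ← cramer_apply,
    cramer_eq_adjugate_mulVec]
  ring

variable [IsDomain R]

theorem det_scalar_sub_of_isNilpotent {N : Matrix ι ι R} (hN : IsNilpotent N)
    (c : R) : (scalar ι c - N).det = c ^ Fintype.card ι := by
  have h := (isNilpotent_charpoly_sub_pow_of_isNilpotent hN).eq_zero
  rw [← eval_charpoly, sub_eq_zero.mp h, eval_pow, eval_X]

theorem adjugate_scalar_sub_of_pow_eq_zero {N : Matrix ι ι R} {m : ℕ}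
    (hN : N ^ m = 0) (hm : m ≤ Fintype.card ι) {c : R} (hc : c ≠ 0) :
    adjugate (scalar ι c - N) = ∑ k ∈ range m, c ^ (Fintype.card ι - 1 - k) • N ^ k := by
  set n := Fintype.card ι
  set B := ∑ k ∈ range m, c ^ (n - 1 - k) • N ^ k
  have hS : ∀ (x : R) (M : Matrix ι ι R), scalar ι x * M = x • M :=
    fun x M => (Algebra.smul_def x M).symm
  have hgeom : (∑ k ∈ range m, N ^ k * scalar ι c ^ (m - 1 - k)) * (scalar ι c - N) =
      scalar ι c ^ m := by
    have hSN : Commute N (scalar ι c) := (scalar_commute c (fun _ => Commute.all _ _) N).symm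
    rw [← neg_sub, mul_neg, hSN.geom_sum₂_mul, hN, zero_sub, neg_neg]
  have hB : B * (scalar ι c - N) = scalar ι (c ^ n) := by
    -- `B` is `c ^ (n - m)` times the geometric sum `hgeom`, which inverts `c - N` up to `c ^ m`.
    have : B = c ^ (n - m) • ∑ k ∈ range m, N ^ k * scalar ι c ^ (m - 1 - k) := by
      rw [smul_sum]
      refine sum_congr rfl fun k hk => ?_
      rw [mem_range] at hk
      rw [← map_pow, ← (scalar_commute _ (fun _ => Commute.all _ _) _).eq, hS, smul_smul,
        ← pow_add]
      congr 2
      omega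
    rw [this, smul_mul_assoc, hgeom, ← map_pow, ← mul_one (scalar ι (c ^ m)), hS, smul_smul,
      ← pow_add, Nat.sub_add_cancel hm, ← hS, mul_one]
  have hdet : (scalar ι c - N).det = c ^ n := det_scalar_sub_of_isNilpotent ⟨m, hN⟩ c
  refine smul_right_injective _ (pow_ne_zero n hc) ?_
  calc c ^ n • adjugate (scalar ι c - N)
        = B * (scalar ι c - N) * adjugate (scalar ι c - N) := by rw [hB, hS]
    _ = c ^ n • B := by
        rw [mul_assoc, mul_adjugate, hdet, mul_smul_comm, mul_one]

end Matrix

theorem Nat.two_mul_le_of_mem_properDivisors {d m : ℕ} (h : d ∈ m.properDivisors) :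
    2 * d ≤ m := by
  have h2 := Nat.one_lt_div_of_mem_properDivisors h
  calc 2 * d ≤ m / d * d := Nat.mul_le_mul_right d h2
    _ = m := Nat.div_mul_cancel (Nat.mem_properDivisors.mp h).1

theorem Finset.sum_range_succ_eq_sum_Icc {M : Type*} [AddCommMonoid M] (f : ℕ → M) (n : ℕ) :
    ∑ i ∈ range n, f (i + 1) = ∑ d ∈ Icc 1 n, f d := by
  rw [range_eq_Ico, sum_Ico_add' f 0 n 1, zero_add, Ico_add_one_right_eq_Icc]

def factorTuples (k m : ℕ) : Finset (Fin k → ℕ) :=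
  (Fintype.piFinset fun _ : Fin k => Icc 2 m).filter fun t => ∏ i, t i = m

theorem mem_factorTuples {k m : ℕ} (hm : m ≠ 0) {t : Fin k → ℕ} :
    t ∈ factorTuples k m ↔ (∀ i, 2 ≤ t i) ∧ ∏ i, t i = m := by
  simp only [factorTuples, mem_filter, Fintype.mem_piFinset, mem_Icc]
  constructor
  · exact fun ⟨h, hprod⟩ => ⟨fun i => (h i).1, hprod⟩
  · rintro ⟨h, rfl⟩
    exact ⟨fun i => ⟨h i, Nat.le_of_dvd (Nat.pos_of_ne_zero hm) (dvd_prod_of_mem t (mem_univ i))⟩,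
      rfl⟩

theorem dcoef_eq_sum_factorTuples (a : ℕ → ℂ) (m k : ℕ) :
    dcoef a m k = ∑ t ∈ factorTuples k m, ∏ i, a (t i) := rfl

theorem dcoef_zero_right (a : ℕ → ℂ) (m : ℕ) : dcoef a m 0 = if m = 1 then 1 else 0 := by
  split_ifs with h <;> simp [dcoef, h, eq_comm]

theorem dcoef_one_left (a : ℕ → ℂ) {k : ℕ} (hk : k ≠ 0) : dcoef a 1 k = 0 := by
  obtain ⟨k, rfl⟩ := Nat.exists_eq_succ_of_ne_zero hk
  simp [dcoef]

theorem dcoef_succ (a : ℕ → ℂ) {m : ℕ} (hm : m ≠ 0) (k : ℕ) :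
    dcoef a m (k + 1) = ∑ d ∈ m.properDivisors, dcoef a d k * a (m / d) := by
  have hlast : ∀ t ∈ factorTuples (k + 1) m,
      (∏ i, t (Fin.castSucc i)) * t (Fin.last k) = m ∧ 2 ≤ t (Fin.last k) ∧
        m / ∏ i, t (Fin.castSucc i) = t (Fin.last k) := by
    intro t ht
    obtain ⟨h2, hprod⟩ := (mem_factorTuples hm).mp ht
    rw [Fin.prod_univ_castSucc] at hprod
    refine ⟨hprod, h2 _, Nat.div_eq_of_eq_mul_right ?_ hprod.symm⟩
    exact Nat.pos_of_ne_zero (left_ne_zero_of_mul (hprod ▸ hm))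
  simp only [dcoef_eq_sum_factorTuples, sum_mul]
  rw [sum_sigma']
  refine sum_bij' (fun t _ => ⟨∏ i, t (Fin.castSucc i), Fin.init t⟩)
    (fun p _ => Fin.snoc p.2 (m / p.1)) ?_ ?_ ?_ ?_ ?_
  · intro t ht
    obtain ⟨hprod, h2, -⟩ := hlast t ht
    have hd : ∏ i, t (Fin.castSucc i) ≠ 0 := left_ne_zero_of_mul (hprod ▸ hm)
    refine mem_sigma.mpr ⟨Nat.mem_properDivisors.mpr ⟨Dvd.intro _ hprod, ?_⟩,
      (mem_factorTuples hd).mpr ⟨fun i => ((mem_factorTuples hm).mp ht).1 _, rfl⟩⟩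
    nlinarith [Nat.pos_of_ne_zero hd]
  · rintro ⟨d, t⟩ hp
    obtain ⟨hd, ht⟩ := mem_sigma.mp hp
    dsimp only at hd ht ⊢
    obtain ⟨h2, rfl⟩ := (mem_factorTuples (Nat.pos_of_mem_properDivisors hd).ne').mp ht
    refine (mem_factorTuples hm).mpr ⟨fun i => ?_, ?_⟩
    · induction i using Fin.lastCases with
      | last => simpa [Nat.succ_le_iff] using Nat.one_lt_div_of_mem_properDivisors hd
      | cast i => simpa using h2 i
    · simp [Fin.prod_univ_castSucc, Nat.mul_div_cancel' (Nat.mem_properDivisors.mp hd).1]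
  · intro t ht
    simp [(hlast t ht).2.2]
  · rintro ⟨d, t⟩ hp
    obtain ⟨hd, ht⟩ := mem_sigma.mp hp
    simp [((mem_factorTuples (Nat.pos_of_mem_properDivisors hd).ne').mp ht).2]
  · intro t ht
    simp [Fin.prod_univ_castSucc, (hlast t ht).2.2, Fin.init]

def Nmat (n : ℕ) (a : ℕ → ℂ) : Matrix (Fin n) (Fin n) ℂ :=
  fun i j => if i.val + 1 ∈ (j.val + 1).properDivisors then a ((j.val + 1) / (i.val + 1)) else 0

theorem Dmat_eq_one_add_Nmat (n : ℕ) {a : ℕ → ℂ} (ha : a 1 = 1) :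
    Dmat n a = 1 + Nmat n a := by
  ext i j
  obtain rfl | hij := eq_or_ne i j
  · simp [Dmat, Nmat, ha]
  · have hlt : i.val + 1 ∣ j.val + 1 → i < j := fun h =>
      lt_of_le_of_ne (Nat.le_of_succ_le_succ (Nat.le_of_dvd j.val.succ_pos h)) hij
    simp [Dmat, Nmat, one_apply_ne hij, Nat.mem_properDivisors, and_iff_left_of_imp hlt]

theorem Nmat_pow_log_succ (n : ℕ) (a : ℕ → ℂ) : Nmat n a ^ (Nat.log 2 n + 1) = 0 := by
  have hN : ∀ i j : Fin n, j.val + 1 < 2 * (i.val + 1) → Nmat n a i j = 0 := by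
    intro i j h
    refine if_neg fun hmem => ?_
    have := Nat.two_mul_le_of_mem_properDivisors hmem
    omega
  ext i j
  refine pow_apply_eq_zero_of_lt_two_pow_mul (fun i => i.val + 1) hN _ i j ?_
  have := Nat.lt_pow_succ_log_self one_lt_two n
  have := Nat.le_mul_of_pos_right (2 ^ (Nat.log 2 n + 1)) (by omega : 0 < i.val + 1)
  have := j.isLt
  omega

theorem Nmat_pow_apply_zero_left (n : ℕ) [NeZero n] (a : ℕ → ℂ) (k : ℕ) (j : Fin n) :
    (Nmat n a ^ k) 0 j = dcoef a (j.val + 1) k := by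
  induction k generalizing j with
  | zero =>
    rw [pow_zero, dcoef_zero_right, one_apply]
    simp only [Fin.ext_iff, Fin.val_zero, add_eq_right, eq_comm (a := 0)]
  | succ k ih =>
    rw [pow_succ, mul_apply, dcoef_succ a j.val.succ_ne_zero]
    simp only [ih, Nmat, mul_ite, mul_zero]
    rw [Fin.sum_univ_eq_sum_range (fun i => if i + 1 ∈ (j.val + 1).properDivisors then
      dcoef a (i + 1) k * a ((j.val + 1) / (i + 1)) else 0), sum_range_succ_eq_sum_Icc
      (fun d => if d ∈ (j.val + 1).properDivisors then dcoef a d k * a ((j.val + 1) / d) else 0),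
      sum_ite_mem, inter_eq_right.mpr]
    intro d hd
    have := (Nat.mem_properDivisors.mp hd).2
    have := j.isLt
    exact mem_Icc.mpr ⟨Nat.pos_of_mem_properDivisors hd, by omega⟩

theorem Nmat_pow_mulVec_Wmat_col (n : ℕ) [NeZero n] (a w : ℕ → ℂ) {k : ℕ} (hk : k ≠ 0) :
    (Nmat n a ^ k *ᵥ fun i => Wmat n w i 0) 0 = vcoef a w n k := by
  simp only [mulVec, dotProduct, Nmat_pow_apply_zero_left]
  rw [vcoef, ← sum_range_succ_eq_sum_Icc (fun j => w j * dcoef a j k),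
    ← Fin.sum_univ_eq_sum_range (fun j => w (j + 1) * dcoef a (j + 1) k)]
  refine sum_congr rfl fun j _ => ?_
  by_cases hj : j.val = 0
  · simp [Wmat, hj, dcoef_one_left a hk]
  · simp [Wmat, hj, mul_comm]

theorem charmatrix_Amat (n : ℕ) {a : ℕ → ℂ} (ha : a 1 = 1) (w : ℕ → ℂ) :
    charmatrix (Amat n a w) =
      scalar (Fin n) (X - 1) - C.mapMatrix (Nmat n a) - C.mapMatrix (Wmat n w) := by
  simp only [charmatrix, Amat, Dmat_eq_one_add_Nmat n ha, map_add, map_sub, map_one]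
  abel

theorem adjugate_mulVec_Wmat_col (n : ℕ) [NeZero n] (a w : ℕ → ℂ) :
    (adjugate (scalar (Fin n) (X - 1) - C.mapMatrix (Nmat n a)) *ᵥ
        fun i => C.mapMatrix (Wmat n w) i 0) 0 =
      ∑ k ∈ Icc 1 (Nat.log 2 n), (X - 1) ^ (n - 1 - k) * C (vcoef a w n k) := by
  have hr : Nat.log 2 n < n := Nat.log_lt_self 2 (NeZero.ne n)
  have hX : (X - 1 : ℂ[X]) ≠ 0 := by simpa using X_sub_C_ne_zero (1 : ℂ)
  have hterm : ∀ k, (C.mapMatrix (Nmat n a) ^ k *ᵥ fun i => C.mapMatrix (Wmat n w) i 0) 0 =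
      C ((Nmat n a ^ k *ᵥ fun i => Wmat n w i 0) 0) := fun k => by
    rw [← map_pow, RingHom.map_mulVec]
    rfl
  rw [adjugate_scalar_sub_of_pow_eq_zero (by rw [← map_pow, Nmat_pow_log_succ, map_zero])
    (by rw [Fintype.card_fin]; omega) hX, Fintype.card_fin, sum_mulVec, Finset.sum_apply]
  simp only [smul_mulVec, Pi.smul_apply, smul_eq_mul, hterm]
  rw [sum_range_succ', ← sum_range_succ_eq_sum_Icc]
  simp only [Nmat_pow_mulVec_Wmat_col n a w (Nat.succ_ne_zero _), pow_zero, one_mulVec]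
  simp [Wmat]

open Polynomial in
theorem charpoly_Amat_general (n : ℕ) (hn : 1 ≤ n) (a w : ℕ → ℂ) (ha : a 1 = 1) :
    (Amat n a w).charpoly =
      (X - 1) ^ (n - Nat.log 2 n - 1) *
        ((X - 1) ^ (Nat.log 2 n + 1) -
          ∑ k ∈ Finset.Icc 1 (Nat.log 2 n), C (vcoef a w n k) * (X - 1) ^ (Nat.log 2 n - k)) := by
  have : NeZero n := ⟨by omega⟩
  have hr : Nat.log 2 n < n := Nat.log_lt_self 2 (by omega)
  have hW : ∀ i j : Fin n, j ≠ 0 → C.mapMatrix (Wmat n w) i j = 0 := fun i j hj => by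
    simp [Wmat, hj]
  have hN : IsNilpotent (C.mapMatrix (Nmat n a)) :=
    IsNilpotent.map ⟨_, Nmat_pow_log_succ n a⟩ C.mapMatrix
  rw [charpoly, charmatrix_Amat n ha, det_sub_of_eq_zero_off_col _ _ hW,
    det_scalar_sub_of_isNilpotent hN, Fintype.card_fin, adjugate_mulVec_Wmat_col, mul_sub,
    ← pow_add, show n - Nat.log 2 n - 1 + (Nat.log 2 n + 1) = n by omega, mul_sum]
  refine congrArg _ (sum_congr rfl fun k hk => ?_)
  rw [mul_left_comm, ← pow_add, mul_comm,
    show n - Nat.log 2 n - 1 + (Nat.log 2 n - k) = n - 1 - k by have := (mem_Icc.mp hk).2; omega]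

open Polynomial in
/-- The characteristic polynomial of `A_n` is
`(x-1)^{n-r-1} ((x-1)^{r+1} - ∑_{k=1}^{r} v(n,k) (x-1)^{r-k})` with `r = ⌊log₂ n⌋`. -/
theorem charpoly_Amat (n : ℕ) (hn : 1 ≤ n) (a w : ℕ → ℂ) (ha : a 1 = 1) (hw : w 1 = 1) :
    (Amat n a w).charpoly =
      (X - 1) ^ (n - Nat.log 2 n - 1) *
        ((X - 1) ^ (Nat.log 2 n + 1) -
          ∑ k ∈ Finset.Icc 1 (Nat.log 2 n), C (vcoef a w n k) * (X - 1) ^ (Nat.log 2 n - k)) :=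
  charpoly_Amat_general n hn a w ha
end

section
/- Every eigenvalue λ ≠ 1 of A_n has geometric multiplicity one; that is, the null space of A_n − λI_n is one-dimensional. -/
open Module Matrix

theorem Matrix.ker_mulVecLin_sub_smul_ne_bot {K ι : Type*} [Field K] [Fintype ι] [DecidableEq ι]
    {A : Matrix ι ι K} {μ : K} (hμ : μ ∈ spectrum K A) :
    LinearMap.ker (A - μ • 1).mulVecLin ≠ ⊥ := by
  rw [← Matrix.spectrum_toLin', ← End.hasEigenvalue_iff_mem_spectrum, End.hasEigenvalue_iff,
    End.eigenspace_def] at hμ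
  simpa [← Matrix.toLin'_apply', map_sub, map_smul, Matrix.toLin'_one, End.one_eq_id] using hμ

theorem Submodule.finrank_le_one_of_eval_injective {K ι : Type*} [Field K]
    {p : Submodule K (ι → K)} (i₀ : ι)
    (h : ∀ v ∈ p, v i₀ = 0 → v = 0) : finrank K p ≤ 1 := by
  have hinj : Function.Injective ((LinearMap.proj i₀ : (ι → K) →ₗ[K] K).comp p.subtype) := by
    rw [← LinearMap.ker_eq_bot, LinearMap.ker_eq_bot']
    intro v hv
    exact Subtype.ext (h v v.2 hv)
  simpa using LinearMap.finrank_le_finrank_of_injective hinj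

theorem Matrix.eq_zero_of_mulVec_eq_zero_of_upperTriangular_off {K ι : Type*} [Field K]
    [Fintype ι] [LinearOrder ι] {M : Matrix ι ι K} (i₀ : ι)
    (htri : ∀ i j, i ≠ i₀ → j ≠ i₀ → j < i → M i j = 0) (hdiag : ∀ i, i ≠ i₀ → M i i ≠ 0)
    {v : ι → K} (hv : M *ᵥ v = 0) (hv₀ : v i₀ = 0) : v = 0 := by
  funext i
  induction i using WellFoundedGT.induction with
  | _ i ih =>
    by_cases hi : i = i₀
    · rw [hi, hv₀]; rfl
    have hrow : ∑ j, M i j * v j = M i i * v i := by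
      refine Finset.sum_eq_single i (fun j _ hji => ?_) (by simp)
      rcases eq_or_ne j i₀ with rfl | hj
      · rw [hv₀, mul_zero]
      rcases lt_or_gt_of_ne hji with hlt | hgt
      · rw [htri i j hi hj hlt, zero_mul]
      · rw [ih j hgt, Pi.zero_apply, mul_zero]
    have : M i i * v i = 0 := by rw [← hrow]; exact congrFun hv i
    exact (mul_eq_zero.mp this).resolve_left (hdiag i hi)

theorem Amat_sub_smul_one_apply_of_lt {n : ℕ} (a w : ℕ → ℂ) (lam : ℂ) {i j : Fin n}
    (hj : j.val ≠ 0) (hji : j < i) : (Amat n a w - lam • 1) i j = 0 := by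
  have hndvd : ¬ (i.val + 1) ∣ (j.val + 1) := fun h =>
    absurd (Nat.le_of_dvd j.val.succ_pos h) (by simpa using hji)
  simp [Amat, Wmat, Dmat, hj, hndvd, Matrix.one_apply_ne hji.ne']

theorem Amat_sub_smul_one_apply_self {n : ℕ} {a : ℕ → ℂ} (ha : a 1 = 1) (w : ℕ → ℂ) (lam : ℂ)
    {i : Fin n} (hi : i.val ≠ 0) : (Amat n a w - lam • 1) i i = 1 - lam := by
  simp [Amat, Wmat, Dmat, hi, ha]

theorem geometric_multiplicity_one_general (n : ℕ) (hn : 2 ≤ n) (a w : ℕ → ℂ) (ha : a 1 = 1)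
    (lam : ℂ) (hlam : lam ≠ 1) (heig : lam ∈ spectrum ℂ (Amat n a w)) :
    Module.finrank ℂ (LinearMap.ker (Matrix.mulVecLin (Amat n a w - lam • 1))) = 1 := by
  let i₀ : Fin n := ⟨0, by omega⟩
  have hi₀ {i : Fin n} (hi : i ≠ i₀) : i.val ≠ 0 := fun h => hi (Fin.ext h)
  refine le_antisymm ?_ (Submodule.one_le_finrank_iff.2 (ker_mulVecLin_sub_smul_ne_bot heig))
  refine Submodule.finrank_le_one_of_eval_injective i₀ fun v hv hv₀ => ?_
  refine eq_zero_of_mulVec_eq_zero_of_upperTriangular_off i₀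
    (fun i j _ hj hji => Amat_sub_smul_one_apply_of_lt a w lam (hi₀ hj) hji)
    (fun i hi => ?_) hv hv₀
  rw [Amat_sub_smul_one_apply_self ha w lam (hi₀ hi)]
  exact sub_ne_zero.2 hlam.symm

/-- Every eigenvalue `λ ≠ 1` of `A_n` has geometric multiplicity one: the null space
of `A_n - λ I_n` is one-dimensional. -/
theorem geometric_multiplicity_one (n : ℕ) (hn : 2 ≤ n) (a w : ℕ → ℂ) (ha : a 1 = 1)
    (hw : w 1 = 1) (lam : ℂ) (hlam : lam ≠ 1) (heig : lam ∈ spectrum ℂ (Amat n a w)) :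
    Module.finrank ℂ (LinearMap.ker (Matrix.mulVecLin (Amat n a w - lam • 1))) = 1 :=
  geometric_multiplicity_one_general n hn a w ha lam hlam heig
end

section
/- Assume a(ℓ) = w(ℓ) = 1 for all ℓ. If k ≥ 1 and 2^k ≤ n, then v(n,k) = Σ_{i=2}^{s} v(⌊n/i⌋, k−1) + Σ_{j=2^{k−1}}^{⌊√n⌋} (⌊n/j⌋ − ⌊n/(j+1)⌋) v(j, k−1), where s = ⌊n/(⌊√n⌋+1)⌋. -/
/-- `dN m k`: the number of `k`-tuples `(ℓ₁, …, ℓ_k)` of integers with each `ℓᵢ ≥ 2`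
and `ℓ₁ ⋯ ℓ_k = m` (the case `a ≡ 1`). -/
def dN (m k : ℕ) : ℕ :=
  ((Fintype.piFinset fun _ : Fin k => Finset.Icc 2 m).filter
      (fun t => ∏ i, t i = m)).card

/-- `vN m k = ∑_{j=1}^{m} d(j,k)` (the case `a ≡ w ≡ 1`). -/
def vN (m k : ℕ) : ℕ :=
  ∑ j ∈ Finset.Icc 1 m, dN j k

/-!
`v(n,k)` counts the `k`-tuples with entries `≥ 2` and product `≤ n`; fixing the first entry `ℓ`
gives `v(n,k) = ∑_{ℓ=2}^{n} v(⌊n/ℓ⌋, k-1)`. For `ℓ > s = ⌊n/(⌊√n⌋+1)⌋` the quotient `⌊n/ℓ⌋` is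
some `j ≤ ⌊√n⌋`, attained by exactly `⌊n/j⌋ - ⌊n/(j+1)⌋` values of `ℓ`, so these terms can be
grouped by `j`; finally `v(j, k-1) = 0` for `j < 2^(k-1)`.
-/

open Finset

lemma Nat.div_eq_of_mem_Ioc {n j ℓ : ℕ} (hj : 0 < j) (hℓ : ℓ ∈ Ioc (n / (j + 1)) (n / j)) :
    n / ℓ = j := by
  obtain ⟨hlo, hhi⟩ := mem_Ioc.1 hℓ
  have hℓpos : 0 < ℓ := (Nat.zero_le _).trans_lt hlo
  have hle : j ≤ n / ℓ := (Nat.le_div_iff_mul_le hℓpos).2 <| by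
    rw [mul_comm]; exact (Nat.le_div_iff_mul_le hj).1 hhi
  have hlt : n / ℓ < j + 1 := (Nat.div_lt_iff_lt_mul hℓpos).2 <| by
    rw [mul_comm]; exact (Nat.div_lt_iff_lt_mul (Nat.succ_pos j)).1 hlo
  omega

theorem Finset.sum_Ioc_div_eq_sum_nsmul {M : Type*} [AddCommMonoid M] (n m : ℕ) (f : ℕ → M) :
    ∑ ℓ ∈ Ioc (n / (m + 1)) n, f (n / ℓ) = ∑ j ∈ Icc 1 m, (n / j - n / (j + 1)) • f j := by
  induction m with
  | zero => simp
  | succ m ih =>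
    have hlevel : ∑ ℓ ∈ Ioc (n / (m + 1 + 1)) (n / (m + 1)), f (n / ℓ)
        = (n / (m + 1) - n / (m + 1 + 1)) • f (m + 1) := by
      rw [sum_congr rfl fun ℓ hℓ => by rw [Nat.div_eq_of_mem_Ioc (Nat.succ_pos m) hℓ],
        sum_const, Nat.card_Ioc]
    rw [← sum_Ioc_consecutive _ (Nat.div_le_div_left (Nat.le_succ (m + 1)) (Nat.succ_pos m))
      (Nat.div_le_self n (m + 1)),
      hlevel, ih, sum_Icc_succ_top (by omega), add_comm]

lemma two_pow_le_prod {k : ℕ} {t : Fin k → ℕ} (ht : ∀ i, 2 ≤ t i) : 2 ^ k ≤ ∏ i, t i := by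
  simpa using pow_card_le_prod univ t 2 fun i _ => ht i

lemma le_prod_of_forall_two_le {k : ℕ} {t : Fin k → ℕ} (ht : ∀ i, 2 ≤ t i) (i : Fin k) :
    t i ≤ ∏ j, t j :=
  single_le_prod' (fun j _ => by linarith [ht j]) (mem_univ i)

def tuplesProdLe (m k : ℕ) : Finset (Fin k → ℕ) :=
  (Fintype.piFinset fun _ : Fin k => Icc 2 m).filter fun t => ∏ i, t i ≤ m

lemma mem_tuplesProdLe {m k : ℕ} {t : Fin k → ℕ} :
    t ∈ tuplesProdLe m k ↔ (∀ i, 2 ≤ t i) ∧ ∏ i, t i ≤ m := by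
  simp only [tuplesProdLe, mem_filter, Fintype.mem_piFinset, mem_Icc]
  exact ⟨fun ⟨h, hm⟩ => ⟨fun i => (h i).1, hm⟩,
    fun ⟨h, hm⟩ => ⟨fun i => ⟨h i, (le_prod_of_forall_two_le h i).trans hm⟩, hm⟩⟩

lemma dN_eq_card_filter_tuplesProdLe {j m : ℕ} (k : ℕ) (hjm : j ≤ m) :
    dN j k = ((tuplesProdLe m k).filter fun t => ∏ i, t i = j).card := by
  unfold dN
  congr 1
  ext t
  simp only [mem_filter, mem_tuplesProdLe, Fintype.mem_piFinset, mem_Icc]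
  constructor
  · rintro ⟨h, hprod⟩
    exact ⟨⟨fun i => (h i).1, hprod.trans_le hjm⟩, hprod⟩
  · rintro ⟨⟨h, -⟩, hprod⟩
    exact ⟨fun i => ⟨h i, hprod ▸ le_prod_of_forall_two_le h i⟩, hprod⟩

lemma vN_eq_card_tuplesProdLe (m k : ℕ) : vN m k = (tuplesProdLe m k).card := by
  rw [card_eq_sum_card_fiberwise (f := fun t => ∏ i, t i) (t := Icc 1 m)]
  · exact sum_congr rfl fun j hj => dN_eq_card_filter_tuplesProdLe k (mem_Icc.1 hj).2
  · intro t ht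
    obtain ⟨h, hm⟩ := mem_tuplesProdLe.1 ht
    exact mem_Icc.2 ⟨Nat.one_le_two_pow.trans (two_pow_le_prod h), hm⟩

lemma vN_eq_zero_of_lt_two_pow {m k : ℕ} (h : m < 2 ^ k) : vN m k = 0 := by
  rw [vN_eq_card_tuplesProdLe, card_eq_zero, eq_empty_iff_forall_notMem]
  intro t ht
  obtain ⟨h2, hm⟩ := mem_tuplesProdLe.1 ht
  exact absurd ((two_pow_le_prod h2).trans hm) h.not_ge

lemma cons_mem_tuplesProdLe_succ {n k ℓ : ℕ} {t : Fin k → ℕ} :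
    (Fin.cons ℓ t : Fin (k + 1) → ℕ) ∈ tuplesProdLe n (k + 1) ↔
      ℓ ∈ Icc 2 n ∧ t ∈ tuplesProdLe (n / ℓ) k := by
  simp only [mem_tuplesProdLe, Fin.forall_fin_succ, Fin.prod_univ_succ, Fin.cons_zero,
    Fin.cons_succ, mem_Icc]
  constructor
  · rintro ⟨⟨hℓ, ht⟩, hprod⟩
    have hle : ℓ ≤ n :=
      le_of_mul_le_of_one_le_left hprod (Nat.one_le_two_pow.trans (two_pow_le_prod ht))
    exact ⟨⟨hℓ, hle⟩, ht, (Nat.le_div_iff_mul_le (by omega)).2 (by rwa [mul_comm])⟩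
  · rintro ⟨⟨hℓ, -⟩, ht, hprod⟩
    exact ⟨⟨hℓ, ht⟩, by rw [mul_comm]; exact (Nat.le_div_iff_mul_le (by omega)).1 hprod⟩

lemma card_tuplesProdLe_succ (n k : ℕ) :
    (tuplesProdLe n (k + 1)).card = ∑ ℓ ∈ Icc 2 n, (tuplesProdLe (n / ℓ) k).card := by
  rw [← card_sigma]
  symm
  refine card_nbij' (fun p => Fin.cons p.1 p.2) (fun t => ⟨t 0, Fin.tail t⟩) ?_ ?_ ?_ ?_
  · rintro ⟨ℓ, t⟩ h
    exact cons_mem_tuplesProdLe_succ.2 (mem_sigma.1 h)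
  · intro t h
    rw [← Fin.cons_self_tail t] at h
    exact mem_sigma.2 (cons_mem_tuplesProdLe_succ.1 h)
  · rintro ⟨ℓ, t⟩ _
    simp
  · intro t _
    exact Fin.cons_self_tail t

lemma vN_succ (n k : ℕ) : vN n (k + 1) = ∑ ℓ ∈ Icc 2 n, vN (n / ℓ) k := by
  simp only [vN_eq_card_tuplesProdLe, card_tuplesProdLe_succ]

lemma sum_Icc_one_mul_vN_eq_sum_Icc_two_pow {m k : ℕ} (g : ℕ → ℕ) :
    ∑ j ∈ Icc 1 m, g j * vN j k = ∑ j ∈ Icc (2 ^ k) m, g j * vN j k := by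
  refine (sum_subset (Icc_subset_Icc_left Nat.one_le_two_pow) fun j hj hj' => ?_).symm
  rw [mem_Icc] at hj hj'
  rw [vN_eq_zero_of_lt_two_pow (by omega), mul_zero]

/-- The hyperbola-method recurrence: if `k ≥ 1` and `2^k ≤ n`, then
`v(n,k) = ∑_{i=2}^{s} v(⌊n/i⌋, k-1)
        + ∑_{j=2^{k-1}}^{⌊√n⌋} (⌊n/j⌋ - ⌊n/(j+1)⌋) v(j, k-1)`,
where `s = ⌊n/(⌊√n⌋+1)⌋`. -/
theorem vN_hyperbola (n k : ℕ) (hk : 1 ≤ k) (hn : 2 ^ k ≤ n) :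
    vN n k = ∑ i ∈ Finset.Icc 2 (n / (Nat.sqrt n + 1)), vN (n / i) (k - 1)
      + ∑ j ∈ Finset.Icc (2 ^ (k - 1)) (Nat.sqrt n),
          (n / j - n / (j + 1)) * vN j (k - 1) := by
  obtain ⟨k, rfl⟩ : ∃ k', k = k' + 1 := ⟨k - 1, by omega⟩
  have hn2 : 2 ≤ n := le_trans (Nat.le_self_pow (by omega) 2) hn
  have hs : 1 ≤ n / (Nat.sqrt n + 1) :=
    (Nat.le_div_iff_mul_le (Nat.succ_pos _)).2 (by have := Nat.sqrt_lt_self hn2; omega)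
  have hIcc_two : ∀ m, Icc 2 m = Ioc 1 m := fun m => Icc_add_one_left_eq_Ioc 1 m
  rw [Nat.add_sub_cancel, vN_succ, ← sum_Icc_one_mul_vN_eq_sum_Icc_two_pow]
  simp only [← smul_eq_mul]
  rw [← sum_Ioc_div_eq_sum_nsmul, hIcc_two, hIcc_two,
    sum_Ioc_consecutive _ hs (Nat.div_le_self _ _)]
end

section
/- For every n ≥ 1, the Mertens function satisfies Σ_{i=1}^{n} μ(i) = Σ_{k=0}^{⌊log₂ n⌋} (−1)^k v(n,k), where v(n,0) = 1. -/
/-!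
Let `Z = ζ - 1`, the indicator of `ℓ ≥ 2`. Then `dN m k` is the value at `m` of the Dirichlet
power `Z ^ k`, which vanishes for `m < 2 ^ k`. Since `μ = ζ⁻¹ = (1 + Z)⁻¹`, the geometric series
`∑ (-Z) ^ k` truncated after `K` terms equals `μ - (-Z) ^ K * μ`, hence agrees with `μ` at every
`m < 2 ^ K`. Summing over `m ≤ n` with `K = ⌊log₂ n⌋ + 1` gives the identity.
-/

open Finset
open scoped ArithmeticFunction.zeta ArithmeticFunction.Moebius

theorem Nat.sum_finMulAntidiag_succ {M : Type*} [AddCommMonoid M] (k m : ℕ)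
    (g : (Fin (k + 1) → ℕ) → M) :
    ∑ t ∈ finMulAntidiag (k + 1) m, g t =
      ∑ p ∈ m.divisorsAntidiagonal, ∑ s ∈ finMulAntidiag k p.2, g (Fin.cons p.1 s) := by
  rw [sum_sigma']
  refine sum_nbij' (fun t => ⟨(t 0, ∏ i, Fin.tail t i), Fin.tail t⟩)
    (fun q => Fin.cons q.1.1 q.2) ?_ ?_ ?_ ?_ ?_
  · intro t ht
    rw [mem_finMulAntidiag, Fin.prod_univ_succ] at ht
    simp only [mem_sigma, mem_divisorsAntidiagonal, mem_finMulAntidiag]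
    exact ⟨ht, trivial, right_ne_zero_of_mul (ht.1 ▸ ht.2)⟩
  · rintro ⟨⟨a, b⟩, s⟩ h
    simp_all [Fin.prod_univ_succ]
  · exact fun t _ => Fin.cons_self_tail t
  · rintro ⟨⟨a, b⟩, s⟩ h
    simp_all
  · exact fun t _ => by rw [Fin.cons_self_tail]

namespace ArithmeticFunction

variable {R : Type*}

instance [Zero R] : IsZeroApply (ArithmeticFunction R) ℕ R where
  zero_apply _ := rfl

instance [AddMonoid R] : IsAddApply (ArithmeticFunction R) ℕ R where
  add_apply _ _ _ := rfl

instance [AddGroup R] : IsSubApply (ArithmeticFunction R) ℕ R where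
  sub_apply f g m := by rw [sub_eq_add_neg, add_apply, neg_apply, ← sub_eq_add_neg]

theorem pow_apply_eq_sum_finMulAntidiag [CommSemiring R] (f : ArithmeticFunction R) (k m : ℕ) :
    (f ^ k) m = ∑ t ∈ Nat.finMulAntidiag k m, ∏ i, f (t i) := by
  induction k generalizing m with
  | zero =>
    rw [pow_zero, one_apply]
    split_ifs with hm
    · rw [hm, Nat.finMulAntidiag_one]
      simp
    · rw [Nat.finMulAntidiag_zero_left hm, sum_empty]
  | succ k ih =>
    rw [pow_succ', mul_apply, Nat.sum_finMulAntidiag_succ]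
    simp only [ih, Fin.prod_univ_succ, Fin.cons_zero, Fin.cons_succ, mul_sum]

theorem neg_pow_apply [CommRing R] (f : ArithmeticFunction R) (k m : ℕ) :
    ((-f) ^ k) m = (-1) ^ k * (f ^ k) m := by
  simp only [pow_apply_eq_sum_finMulAntidiag, neg_apply, prod_neg, card_univ, Fintype.card_fin,
    mul_sum]

theorem coe_zeta_sub_one_apply [AddGroupWithOne R] (m : ℕ) :
    ((ζ : ArithmeticFunction R) - 1) m = if 2 ≤ m then 1 else 0 := by
  rw [sub_apply, natCoe_apply, zeta_apply, one_apply]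
  split_ifs <;> first | omega | simp

end ArithmeticFunction

theorem dN_eq_card_filter_finMulAntidiag (m k : ℕ) :
    dN m k = #{t ∈ Nat.finMulAntidiag k m | ∀ i, 2 ≤ t i} := by
  rw [dN]
  congr 1
  ext t
  simp only [mem_filter, Nat.mem_finMulAntidiag, Fintype.mem_piFinset, mem_Icc]
  constructor
  · rintro ⟨ht, hprod⟩
    have hm : m ≠ 0 := hprod ▸ prod_ne_zero_iff.mpr fun i _ => by have := (ht i).1; omega
    exact ⟨⟨hprod, hm⟩, fun i => (ht i).1⟩
  · rintro ⟨⟨hprod, hm⟩, h2⟩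
    have hdvd : ∀ i, t i ∣ m := fun i => hprod ▸ dvd_prod_of_mem t (mem_univ i)
    exact ⟨fun i => ⟨h2 i, Nat.le_of_dvd (Nat.pos_of_ne_zero hm) (hdvd i)⟩, hprod⟩

theorem coe_zeta_sub_one_pow_apply {R : Type*} [CommRing R] (k m : ℕ) :
    (((ζ : ArithmeticFunction R) - 1) ^ k) m = dN m k := by
  rw [ArithmeticFunction.pow_apply_eq_sum_finMulAntidiag, dN_eq_card_filter_finMulAntidiag,
    natCast_card_filter]
  refine sum_congr rfl fun t _ => ?_
  simp only [ArithmeticFunction.coe_zeta_sub_one_apply]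
  convert Fintype.prod_boole

theorem dN_eq_zero_of_lt_two_pow {m k : ℕ} (h : m < 2 ^ k) : dN m k = 0 := by
  rw [dN, card_eq_zero, filter_eq_empty_iff]
  intro t ht hprod
  have h2 : ∀ i, 2 ≤ t i := fun i => (mem_Icc.mp (Fintype.mem_piFinset.mp ht i)).1
  have : 2 ^ k ≤ ∏ i, t i :=
    calc 2 ^ k = ∏ _i : Fin k, 2 := by simp
      _ ≤ ∏ i, t i := prod_le_prod' fun i _ => h2 i
  omega

theorem moebius_eq_sum_range_dN {m K : ℕ} (hm : m < 2 ^ K) :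
    μ m = ∑ k ∈ range K, (-1 : ℤ) ^ k * dN m k := by
  set W : ArithmeticFunction ℤ := -(ζ - 1)
  have hW : ∀ k j, (W ^ k) j = (-1) ^ k * dN j k := fun k j => by
    rw [ArithmeticFunction.neg_pow_apply, coe_zeta_sub_one_pow_apply]
  have hgeom : (∑ k ∈ range K, W ^ k) * ζ = 1 - W ^ K := by
    rw [← geom_sum_mul_neg, sub_neg_eq_add, add_sub_cancel]
  have hinv : ∑ k ∈ range K, W ^ k = μ - W ^ K * μ :=
    calc ∑ k ∈ range K, W ^ k = (∑ k ∈ range K, W ^ k) * ζ * μ := by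
          rw [mul_assoc, ArithmeticFunction.coe_zeta_mul_moebius, mul_one]
      _ = μ - W ^ K * μ := by rw [hgeom, sub_mul, one_mul]
  have htail : (W ^ K * μ) m = 0 := by
    refine ArithmeticFunction.mul_apply.trans (sum_eq_zero fun p hp => ?_)
    have hp1 : p.1 ≤ m := Nat.divisor_le (Nat.fst_mem_divisors_of_mem_antidiagonal hp)
    rw [hW, dN_eq_zero_of_lt_two_pow (hp1.trans_lt hm), Nat.cast_zero, mul_zero, zero_mul]
  have hinv_m := congrArg (· m) hinv
  simp only [_root_.sum_apply, sub_apply, hW, htail, sub_zero] at hinv_m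
  exact hinv_m.symm

theorem mertens_eq_alternating_sum_general (n : ℕ) :
    ∑ i ∈ Finset.Icc 1 n, ArithmeticFunction.moebius i =
      ∑ k ∈ Finset.range (Nat.log 2 n + 1), (-1 : ℤ) ^ k * (vN n k : ℤ) := by
  have hμ : ∀ i ∈ Icc 1 n, μ i = ∑ k ∈ range (Nat.log 2 n + 1), (-1 : ℤ) ^ k * dN i k :=
    fun i hi => moebius_eq_sum_range_dN <|
      (mem_Icc.1 hi).2.trans_lt (Nat.lt_pow_succ_log_self one_lt_two n)
  rw [sum_congr rfl hμ, sum_comm]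
  simp only [vN, Nat.cast_sum, mul_sum]

/-- For every `n ≥ 1`, the Mertens function satisfies
`∑_{i=1}^{n} μ(i) = ∑_{k=0}^{⌊log₂ n⌋} (-1)^k v(n,k)`. -/
theorem mertens_eq_alternating_sum (n : ℕ) (hn : 1 ≤ n) :
    ∑ i ∈ Finset.Icc 1 n, ArithmeticFunction.moebius i =
      ∑ k ∈ Finset.range (Nat.log 2 n + 1), (-1 : ℤ) ^ k * (vN n k : ℤ) :=
  mertens_eq_alternating_sum_general n
end
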